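/- arXiv:1308.5884 — 3 statements merged into one kernel-verified Lean document; each statement's English description precedes it below -/
import Mathlib

section
/- For positive semidefinite operators ρ, σ on a finite-dimensional Hilbert space with supp(ρ) ⊆ supp(σ), the max-relative entropy D_max(ρ‖σ) := min{λ : ρ ≤ 2^λ σ} equals log‖σ^{-1/2} ρ σ^{-1/2}‖_∞, where σ^{-1/2} is the square root of the generalized inverse of σ. -/
open scoped ComplexOrder Kronecker
open Matrix Classical

noncomputable def msqrt {n : Type*} [Fintype n] [DecidableEq n] (A : Matrix n n ℂ) :
    Matrix n n ℂ :=
  if h : A.PosSemidef then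
    (h.1.eigenvectorUnitary : Matrix n n ℂ) * diagonal ((↑) ∘ (√·) ∘ h.1.eigenvalues) *
      (star h.1.eigenvectorUnitary : Matrix n n ℂ)
  else 0

noncomputable def traceNorm {n : Type*} [Fintype n] [DecidableEq n] (A : Matrix n n ℂ) : ℝ :=
  (msqrt (Aᴴ * A)).trace.re

noncomputable def fid {n : Type*} [Fintype n] [DecidableEq n] (ρ σ : Matrix n n ℂ) : ℝ :=
  traceNorm (msqrt ρ * msqrt σ) + Real.sqrt ((1 - ρ.trace.re) * (1 - σ.trace.re))

noncomputable def pdist {n : Type*} [Fintype n] [DecidableEq n] (ρ σ : Matrix n n ℂ) : ℝ :=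
  Real.sqrt (1 - (fid ρ σ) ^ 2)

/-- Loewner order: `A ≤ B` iff `B - A` is positive semidefinite. -/
def loewnerLE {n : Type*} [Fintype n] (A B : Matrix n n ℂ) : Prop := (B - A).PosSemidef

/-- Max-relative entropy `D_max(ρ‖σ) = min {λ : ρ ≤ 2^λ σ}`. -/
noncomputable def Dmax {n : Type*} [Fintype n] (ρ σ : Matrix n n ℂ) : ℝ :=
  sInf {l : ℝ | loewnerLE ρ (((2 : ℝ) ^ l) • σ)}

def Subnormalized {n : Type*} [Fintype n] (ρ : Matrix n n ℂ) : Prop :=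
  ρ.PosSemidef ∧ 0 < ρ.trace.re ∧ ρ.trace.re ≤ 1

def IsDensity {n : Type*} [Fintype n] (ρ : Matrix n n ℂ) : Prop :=
  ρ.PosSemidef ∧ ρ.trace = 1

/-- Operator norm (largest singular value). -/
noncomputable def opNorm {n : Type*} [Fintype n] [DecidableEq n] (A : Matrix n n ℂ) : ℝ :=
  ‖Matrix.toEuclideanCLM (𝕜 := ℂ) A‖

/-- Square root of the Moore–Penrose pseudoinverse of a Hermitian matrix. -/
noncomputable def pinvSqrt {n : Type*} [Fintype n] [DecidableEq n] (A : Matrix n n ℂ) :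
    Matrix n n ℂ :=
  if h : A.IsHermitian then
    (h.eigenvectorUnitary : Matrix n n ℂ) *
      Matrix.diagonal (fun i => ((Real.sqrt (h.eigenvalues i))⁻¹ : ℂ)) *
      (star h.eigenvectorUnitary : Matrix n n ℂ)
  else 0

/-- Support (range) of a matrix. -/
noncomputable def msupp {n : Type*} [Fintype n] (A : Matrix n n ℂ) : Submodule ℂ (n → ℂ) :=
  LinearMap.range A.mulVecLin

/-!
Congruence by `s = σ^{-1/2}` preserves the Loewner order and turns `ρ ≤ c σ` into
`s ρ s ≤ c (s σ s) ≤ c`, since `s σ s` is the projection onto the support of `σ`.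
Conversely, congruence by `r = σ^{1/2}` turns `s ρ s ≤ c` back into `ρ ≤ c σ`, because `r s` is
that same projection and it fixes `ρ` by the support hypothesis. For positive `s ρ s` the
condition `s ρ s ≤ c` means `‖s ρ s‖ ≤ c`, so the feasible set of `D_max` is
`{λ | ‖s ρ s‖ ≤ 2^λ}`, whose infimum is `log ‖s ρ s‖`.
-/

open scoped MatrixOrder Matrix.Norms.L2Operator

-- For `a = 0` the set is all of `ℝ` and both sides are the junk value `0`.
lemma Real.sInf_setOf_le_rpow {b a : ℝ} (hb : 1 < b) (ha : 0 ≤ a) :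
    sInf {l : ℝ | a ≤ b ^ l} = Real.logb b a := by
  rcases ha.eq_or_lt with rfl | ha
  · have : {l : ℝ | 0 ≤ b ^ l} = Set.univ :=
      Set.eq_univ_of_forall fun l => Real.rpow_nonneg (by linarith) l
    rw [this, Real.sInf_of_not_bddBelow not_bddBelow_univ, Real.logb_zero]
  · have : {l : ℝ | a ≤ b ^ l} = Set.Ici (Real.logb b a) :=
      Set.ext fun l => (Real.logb_le_iff_le_rpow hb ha).symm
    rw [this, csInf_Ici]

section

variable {n : Type*} [Fintype n] [DecidableEq n]

lemma mul_eq_self_of_msupp_le {A B P : Matrix n n ℂ} (hAB : msupp A ≤ msupp B) (hP : P * B = B) :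
    P * A = A := by
  ext i j
  obtain ⟨y, hy⟩ := hAB (LinearMap.mem_range_self A.mulVecLin (Pi.single j 1))
  simp only [mulVecLin_apply, mulVec_single_one] at hy
  have := congrFun (congrArg (· *ᵥ y) hP) i
  simp only [← mulVec_mulVec, hy] at this
  simpa [mul_apply, col_apply, mulVec, dotProduct] using this

lemma pinvSqrt_eq_cfc {A : Matrix n n ℂ} (hA : A.IsHermitian) :
    pinvSqrt A = cfc (fun x : ℝ => (√x)⁻¹) A := by
  rw [pinvSqrt, dif_pos hA, hA.cfc_eq, IsHermitian.cfc, Unitary.conjStarAlgAut_apply]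
  congr! with i
  simp

lemma isSelfAdjoint_pinvSqrt {A : Matrix n n ℂ} (hA : A.IsHermitian) :
    IsSelfAdjoint (pinvSqrt A) :=
  pinvSqrt_eq_cfc hA ▸ cfc_predicate _ A

lemma le_smul_iff_conj_pinvSqrt_le {ρ σ : Matrix n n ℂ} (hρ : ρ.PosSemidef) (hσ : σ.PosSemidef)
    (hsupp : msupp ρ ≤ msupp σ) {c : ℝ} (hc : 0 ≤ c) :
    ρ ≤ c • σ ↔ pinvSqrt σ * ρ * pinvSqrt σ ≤ algebraMap ℝ _ c := by
  have hcont (f : ℝ → ℝ) : ContinuousOn f (spectrum ℝ σ) := σ.finite_real_spectrum.continuousOn f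
  have hspec : ∀ x ∈ spectrum ℝ σ, 0 ≤ x := fun x hx => spectrum_nonneg_of_nonneg hσ.nonneg hx
  set s := cfc (fun x : ℝ => (√x)⁻¹) σ
  set r := cfc (√·) σ
  have hs : IsSelfAdjoint s := cfc_predicate _ σ
  have hr : IsSelfAdjoint r := cfc_predicate _ σ
  have hsσs : s * σ * s ≤ 1 := by
    have : s * σ * s = cfc (fun x : ℝ => (√x)⁻¹ * x * (√x)⁻¹) σ := by
      rw [cfc_mul _ _ σ (hcont _) (hcont _), cfc_mul _ _ σ (hcont _) (hcont _), cfc_id' ℝ σ]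
    rw [this]
    refine cfc_le_one _ σ fun x hx => ?_
    rcases (hspec x hx).eq_or_lt with rfl | hx
    · simp
    · rw [mul_comm, ← mul_assoc, ← mul_inv, Real.mul_self_sqrt hx.le, inv_mul_cancel₀ hx.ne']
  have hrr : r * r = σ := by
    rw [← cfc_mul _ _ σ (hcont _) (hcont _)]
    exact (cfc_congr fun x hx => Real.mul_self_sqrt (hspec x hx)).trans (cfc_id' ℝ σ)
  have hrsσ : r * s * σ = σ := by
    rw [← cfc_id' ℝ σ, ← cfc_mul _ _ σ (hcont _) (hcont _), ← cfc_mul _ _ σ (hcont _) (hcont _)]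
    refine cfc_congr fun x hx => ?_
    rcases (hspec x hx).eq_or_lt with rfl | hx
    · simp
    · rw [mul_inv_cancel₀ (Real.sqrt_pos.mpr hx).ne', one_mul]
  have hrsρ : r * s * ρ = ρ := mul_eq_self_of_msupp_le hsupp hrsσ
  have hρsr : ρ * s * r = ρ := by
    simpa [mul_assoc, hs.star_eq, hr.star_eq, hρ.1.star_eq] using congrArg star hrsρ
  have hrsρsr : r * (s * ρ * s) * r = ρ := by
    rw [show r * (s * ρ * s) * r = r * s * ρ * s * r by simp only [mul_assoc], hrsρ, hρsr]
  rw [pinvSqrt_eq_cfc hσ.1]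
  constructor
  · intro h
    calc s * ρ * s ≤ s * (c • σ) * s := hs.conjugate_le_conjugate h
      _ = c • (s * σ * s) := by rw [mul_smul_comm, smul_mul_assoc]
      _ ≤ c • 1 := smul_le_smul_of_nonneg_left hsσs hc
      _ = algebraMap ℝ _ c := (Algebra.algebraMap_eq_smul_one c).symm
  · intro h
    calc ρ = r * (s * ρ * s) * r := hrsρsr.symm
      _ ≤ r * algebraMap ℝ _ c * r := hr.conjugate_le_conjugate h
      _ = c • σ := by rw [← Algebra.commutes, mul_assoc, hrr, Algebra.smul_def]

end

theorem stmt1 {n : Type*} [Fintype n] [DecidableEq n] (ρ σ : Matrix n n ℂ)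
    (hρ : ρ.PosSemidef) (hσ : σ.PosSemidef) (hsupp : msupp ρ ≤ msupp σ) :
    Dmax ρ σ = Real.logb 2 (opNorm (pinvSqrt σ * ρ * pinvSqrt σ)) := by
  have hM : 0 ≤ pinvSqrt σ * ρ * pinvSqrt σ :=
    (isSelfAdjoint_pinvSqrt hσ.1).conjugate_nonneg hρ.nonneg
  have hfeasible : {l : ℝ | loewnerLE ρ ((2 : ℝ) ^ l • σ)}
      = {l : ℝ | opNorm (pinvSqrt σ * ρ * pinvSqrt σ) ≤ 2 ^ l} :=
    Set.ext fun l =>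
      (le_smul_iff_conj_pinvSqrt_le hρ hσ hsupp (by positivity)).trans
        (CStarAlgebra.norm_le_iff_le_algebraMap _ (by positivity) hM).symm
  rw [Dmax, hfeasible]
  exact Real.sInf_setOf_le_rpow one_lt_two (norm_nonneg _)
end

section
/- Rescaling toward normalization cannot increase purified distance to a normalized state: if ρ is a normalized state (tr ρ = 1), ρ' is subnormalized with P(ρ, ρ') ≤ ε, then the normalized state ρ'/tr(ρ') also satisfies P(ρ, ρ'/tr(ρ')) ≤ ε. -/
open scoped ComplexOrder Kronecker
open Matrix Classical

/-!
When `tr ρ = 1` the fidelity is just `‖√ρ √σ‖₁`. The square root and the trace norm are positively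
homogeneous, so `F(ρ, ρ'/t) = t^{-1/2} F(ρ, ρ') ≥ F(ρ, ρ')` for `t = tr ρ' ≤ 1`, and the purified
distance is antitone in the fidelity.
-/

section

variable {n : Type*} [Fintype n] [DecidableEq n]

lemma msqrt_eq_cfc {A : Matrix n n ℂ} (hA : A.PosSemidef) : msqrt A = cfc Real.sqrt A := by
  rw [msqrt, dif_pos hA, hA.1.cfc_eq]
  rfl

open scoped MatrixOrder in
lemma msqrt_posSemidef (A : Matrix n n ℂ) : (msqrt A).PosSemidef := by
  by_cases hA : A.PosSemidef
  · rw [msqrt_eq_cfc hA, ← nonneg_iff_posSemidef]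
    exact cfc_nonneg fun x _ => Real.sqrt_nonneg x
  · simp only [msqrt, dif_neg hA]
    exact .zero

lemma msqrt_smul {c : ℝ} (hc : 0 ≤ c) {A : Matrix n n ℂ} (hA : A.PosSemidef) :
    msqrt (c • A) = Real.sqrt c • msqrt A := by
  rw [msqrt_eq_cfc (hA.smul hc), msqrt_eq_cfc hA, ← cfc_smul (Real.sqrt c) Real.sqrt A]
  refine (cfc_comp_smul c Real.sqrt A (ha := hA.1)).symm.trans ?_
  congr 1
  funext x
  simp only [smul_eq_mul, Real.sqrt_mul hc]

lemma traceNorm_nonneg (A : Matrix n n ℂ) : 0 ≤ traceNorm A :=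
  (Complex.nonneg_iff.mp (msqrt_posSemidef _).trace_nonneg).1

lemma traceNorm_smul (c : ℝ) (A : Matrix n n ℂ) : traceNorm (c • A) = |c| * traceNorm A := by
  have hsq : (c • A)ᴴ * (c • A) = (c * c) • (Aᴴ * A) := by
    rw [conjTranspose_smul, star_trivial, smul_mul_smul_comm]
  rw [traceNorm, traceNorm, hsq, msqrt_smul (mul_self_nonneg c) (posSemidef_conjTranspose_mul_self A),
    Real.sqrt_mul_self_eq_abs, trace_smul, Complex.smul_re, smul_eq_mul]

lemma fid_nonneg (ρ σ : Matrix n n ℂ) : 0 ≤ fid ρ σ :=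
  add_nonneg (traceNorm_nonneg _) (Real.sqrt_nonneg _)

lemma fid_of_trace_re_eq_one {ρ : Matrix n n ℂ} (hρ : ρ.trace.re = 1) (σ : Matrix n n ℂ) :
    fid ρ σ = traceNorm (msqrt ρ * msqrt σ) := by
  simp [fid, hρ]

lemma fid_smul_right {ρ σ : Matrix n n ℂ} (hρ : ρ.trace.re = 1) (hσ : σ.PosSemidef)
    {c : ℝ} (hc : 0 ≤ c) : fid ρ (c • σ) = Real.sqrt c * fid ρ σ := by
  rw [fid_of_trace_re_eq_one hρ, fid_of_trace_re_eq_one hρ, msqrt_smul hc hσ, mul_smul_comm,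
    traceNorm_smul, abs_of_nonneg (Real.sqrt_nonneg c)]

lemma fid_le_fid_normalize {ρ σ : Matrix n n ℂ} (hρ : ρ.trace.re = 1) (hσ : Subnormalized σ) :
    fid ρ σ ≤ fid ρ (σ.trace.re⁻¹ • σ) := by
  obtain ⟨hσpsd, htr_pos, htr_le⟩ := hσ
  rw [fid_smul_right hρ hσpsd (inv_nonneg.mpr htr_pos.le)]
  have hone : 1 ≤ Real.sqrt σ.trace.re⁻¹ :=
    Real.one_le_sqrt.mpr (one_le_inv₀ htr_pos |>.mpr htr_le)
  exact le_mul_of_one_le_left (fid_nonneg ρ σ) hone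

lemma pdist_le_pdist_of_fid_le {ρ σ τ : Matrix n n ℂ} (hσ : 0 ≤ fid ρ σ)
    (hστ : fid ρ σ ≤ fid ρ τ) : pdist ρ τ ≤ pdist ρ σ :=
  Real.sqrt_le_sqrt (by nlinarith)

end

theorem stmt9 {n : Type*} [Fintype n] [DecidableEq n] (ρ ρ' : Matrix n n ℂ)
    (hρ : IsDensity ρ) (hρ' : Subnormalized ρ') (ε : ℝ) (h : pdist ρ ρ' ≤ ε) :
    pdist ρ ((ρ'.trace.re)⁻¹ • ρ') ≤ ε := by
  have htr : ρ.trace.re = 1 := by simp [hρ.2]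
  exact (pdist_le_pdist_of_fid_le (fid_nonneg ρ ρ') (fid_le_fid_normalize htr hρ')).trans h
end

section
/- Monotonicity of generalized fidelity under adding a positive part: if ρ is a normalized state and σ, ω are subnormalized states with σ ≤ ω, then ‖√ω √ρ‖₁ ≥ ‖√σ √ρ‖₁, and hence P(ω, ρ) ≤ √(1 − ‖√σ √ρ‖₁²). -/
open scoped ComplexOrder Kronecker
open Matrix Classical

noncomputable def Matrix.PosSemidef.sqrt {n : Type*} [Fintype n] [DecidableEq n]
    {A : Matrix n n ℂ} (h : A.PosSemidef) : Matrix n n ℂ :=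
  (h.1.eigenvectorUnitary : Matrix n n ℂ) * diagonal ((↑) ∘ (√·) ∘ h.1.eigenvalues) *
    (star h.1.eigenvectorUnitary : Matrix n n ℂ)

lemma msqrt_eq {n : Type*} [Fintype n] [DecidableEq n] {A : Matrix n n ℂ}
    (h : A.PosSemidef) : msqrt A = h.sqrt := by
  rw [msqrt, dif_pos h]; rfl

lemma Matrix.PosSemidef.posSemidef_sqrt {n : Type*} [Fintype n] [DecidableEq n]
    {A : Matrix n n ℂ} (h : A.PosSemidef) : h.sqrt.PosSemidef := by
  unfold Matrix.PosSemidef.sqrt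
  have hd : (diagonal ((↑) ∘ (√·) ∘ h.1.eigenvalues : n → ℂ)).PosSemidef := by
    rw [posSemidef_diagonal_iff]; intro i; simp [Real.sqrt_nonneg]
  rw [star_eq_conjTranspose]
  exact hd.mul_mul_conjTranspose_same _

lemma Matrix.PosSemidef.sqrt_mul_self {n : Type*} [Fintype n] [DecidableEq n]
    {A : Matrix n n ℂ} (h : A.PosSemidef) : h.sqrt * h.sqrt = A := by
  unfold Matrix.PosSemidef.sqrt
  have hU : (star h.1.eigenvectorUnitary : Matrix n n ℂ) *
      (h.1.eigenvectorUnitary : Matrix n n ℂ) = 1 := Unitary.coe_star_mul_self _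
  conv_rhs => rw [h.1.spectral_theorem, Unitary.conjStarAlgAut_apply]
  calc _ = (h.1.eigenvectorUnitary : Matrix n n ℂ) *
        (diagonal ((↑) ∘ (√·) ∘ h.1.eigenvalues) *
          ((star h.1.eigenvectorUnitary : Matrix n n ℂ) * (h.1.eigenvectorUnitary : Matrix n n ℂ))
          * diagonal ((↑) ∘ (√·) ∘ h.1.eigenvalues)) *
        (star h.1.eigenvectorUnitary : Matrix n n ℂ) := by simp only [mul_assoc]
    _ = _ := by
      rw [hU, mul_one, diagonal_mul_diagonal]
      congr 3
      funext i
      simp only [Function.comp_apply]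
      rw [← Complex.ofReal_mul, Real.mul_self_sqrt (h.eigenvalues_nonneg i)]
      rfl

lemma psd_diag_re_nonneg {n : Type*} [Fintype n] [DecidableEq n] {A : Matrix n n ℂ}
    (hA : A.PosSemidef) (i : n) : 0 ≤ (A i i).re := by
  have h := hA.dotProduct_mulVec_nonneg (Pi.single i 1)
  simp [dotProduct, mulVec, Pi.single_apply, Finset.sum_ite_eq] at h
  exact (Complex.le_def.mp h).1

lemma psd_trace_re_nonneg {n : Type*} [Fintype n] [DecidableEq n] {A : Matrix n n ℂ}
    (hA : A.PosSemidef) : 0 ≤ A.trace.re := by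
  rw [Matrix.trace, Complex.re_sum]
  exact Finset.sum_nonneg fun i _ => psd_diag_re_nonneg hA i

lemma trace_re_mono_of_sq_le_sq {n : Type*} [Fintype n] [DecidableEq n]
    {P Q : Matrix n n ℂ} (hP : P.PosSemidef) (hQ : Q.PosSemidef)
    (h : (P * P - Q * Q).PosSemidef) : Q.trace.re ≤ P.trace.re := by
  set U : Matrix n n ℂ := (hP.1.eigenvectorUnitary : Matrix n n ℂ) with hUdef
  have hU1 : U * star U = 1 := mem_unitaryGroup_iff.mp hP.1.eigenvectorUnitary.2
  set d : n → ℝ := hP.1.eigenvalues with hddef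
  have hd0 : ∀ i, 0 ≤ d i := fun i => hP.eigenvalues_nonneg i
  set D : Matrix n n ℂ := diagonal (Complex.ofReal ∘ d) with hDdef
  have hD : star U * P * U = D := by
    have := hP.1.conjStarAlgAut_star_eigenvectorUnitary
    simpa [hUdef, hDdef, hddef] using this
  set Q' : Matrix n n ℂ := star U * Q * U with hQ'def
  have hQ'psd : Q'.PosSemidef := by
    have := hQ.conjTranspose_mul_mul_same U
    rwa [← star_eq_conjTranspose] at this
  have hcancel : ∀ X : Matrix n n ℂ, U * (star U * X) = X := by
    intro X; rw [← mul_assoc, hU1, one_mul]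
  have hQ'sq : Q' * Q' = star U * (Q * Q) * U := by
    rw [hQ'def]
    simp only [mul_assoc]
    rw [hcancel]
  have hDsq : D * D = star U * (P * P) * U := by
    rw [← hD]
    simp only [mul_assoc]
    rw [hcancel]
  have hdiff : (D * D - Q' * Q').PosSemidef := by
    rw [hQ'sq, hDsq]
    have : star U * (P * P) * U - star U * (Q * Q) * U = star U * (P * P - Q * Q) * U := by
      rw [Matrix.mul_sub, Matrix.sub_mul]
    rw [this]
    have := h.conjTranspose_mul_mul_same U
    rwa [← star_eq_conjTranspose] at this
  have key : ∀ i, (Q' i i).re ≤ d i := by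
    intro i
    have h1 : ((Q' * Q') i i).re ≤ (d i) ^ 2 := by
      have := psd_diag_re_nonneg hdiff i
      rw [Matrix.sub_apply, Complex.sub_re] at this
      have hDD : ((D * D) i i).re = (d i) ^ 2 := by
        rw [hDdef, diagonal_mul_diagonal, diagonal_apply_eq]
        simp [pow_two]
      linarith
    have h2 : Complex.normSq (Q' i i) ≤ ((Q' * Q') i i).re := by
      have herm : ∀ j k, Q' j k * Q' k j = (Complex.normSq (Q' j k) : ℂ) := by
        intro j k
        have : Q' k j = star (Q' j k) := by
          conv_lhs => rw [← hQ'psd.1]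
          rw [conjTranspose_apply]
        rw [this, Complex.star_def, Complex.mul_conj]
      rw [Matrix.mul_apply]
      have : ∑ j, Q' i j * Q' j i = ∑ j, (Complex.normSq (Q' i j) : ℂ) := by
        exact Finset.sum_congr rfl fun j _ => herm i j
      rw [this, Complex.re_sum]
      simp only [Complex.ofReal_re]
      exact Finset.single_le_sum (f := fun j => Complex.normSq (Q' i j))
        (fun j _ => Complex.normSq_nonneg _) (Finset.mem_univ i)
    have h3 : (Q' i i).re ^ 2 ≤ Complex.normSq (Q' i i) := by
      rw [Complex.normSq_apply]; nlinarith [sq_nonneg (Q' i i).im]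
    have h4 : 0 ≤ (Q' i i).re := psd_diag_re_nonneg hQ'psd i
    nlinarith [hd0 i]
  have htrQ : Q.trace = Q'.trace := by
    rw [hQ'def, Matrix.trace_mul_cycle, hU1, one_mul]
  have htrP : P.trace = D.trace := by
    rw [← hD, Matrix.trace_mul_cycle, hU1, one_mul]
  rw [htrQ, htrP, Matrix.trace, Matrix.trace, Complex.re_sum, Complex.re_sum]
  apply Finset.sum_le_sum
  intro i _
  simpa [hDdef] using key i

lemma conj_sq_eq {n : Type*} [Fintype n] [DecidableEq n] {τ ρ : Matrix n n ℂ}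
    (hτ : τ.PosSemidef) (hρ : ρ.PosSemidef) :
    (msqrt τ * msqrt ρ)ᴴ * (msqrt τ * msqrt ρ) = hρ.sqrt * τ * hρ.sqrt := by
  rw [msqrt_eq hτ, msqrt_eq hρ, conjTranspose_mul,
    hρ.posSemidef_sqrt.1.eq, hτ.posSemidef_sqrt.1.eq]
  calc hρ.sqrt * hτ.sqrt * (hτ.sqrt * hρ.sqrt)
      = hρ.sqrt * (hτ.sqrt * hτ.sqrt) * hρ.sqrt := by noncomm_ring
    _ = hρ.sqrt * τ * hρ.sqrt := by rw [hτ.sqrt_mul_self]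

lemma conj_psd {n : Type*} [Fintype n] [DecidableEq n] {τ ρ : Matrix n n ℂ}
    (hτ : τ.PosSemidef) (hρ : ρ.PosSemidef) : (hρ.sqrt * τ * hρ.sqrt).PosSemidef := by
  have := hτ.conjTranspose_mul_mul_same hρ.sqrt
  rwa [hρ.posSemidef_sqrt.1.eq] at this

lemma traceNorm_eq {n : Type*} [Fintype n] [DecidableEq n] {τ ρ : Matrix n n ℂ}
    (hτ : τ.PosSemidef) (hρ : ρ.PosSemidef) :
    traceNorm (msqrt τ * msqrt ρ) = ((conj_psd hτ hρ).sqrt).trace.re := by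
  rw [traceNorm, conj_sq_eq hτ hρ, msqrt_eq (conj_psd hτ hρ)]

theorem stmt17 {n : Type*} [Fintype n] [DecidableEq n] (ρ σ ω : Matrix n n ℂ)
    (hρ : IsDensity ρ) (hσ : σ.PosSemidef) (hω : ω.PosSemidef)
    (hle : loewnerLE σ ω) (hω0 : 0 < ω.trace.re) (hω1 : ω.trace.re ≤ 1) :
    traceNorm (msqrt σ * msqrt ρ) ≤ traceNorm (msqrt ω * msqrt ρ) ∧
    pdist ω ρ ≤ Real.sqrt (1 - (traceNorm (msqrt σ * msqrt ρ)) ^ 2) := by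
  obtain ⟨hρp, hρtr⟩ := hρ
  have hρre : ρ.trace.re = 1 := by rw [hρtr]; simp
  have hle' : (ω - σ).PosSemidef := hle
  have hFσ := traceNorm_eq hσ hρp
  have hFω := traceNorm_eq hω hρp
  have hdiffpsd : (hρp.sqrt * ω * hρp.sqrt - hρp.sqrt * σ * hρp.sqrt).PosSemidef := by
    have h1 := conj_psd hle' hρp
    have h2 : hρp.sqrt * (ω - σ) * hρp.sqrt
        = hρp.sqrt * ω * hρp.sqrt - hρp.sqrt * σ * hρp.sqrt := by noncomm_ring
    rwa [h2] at h1
  have hsqle : ((conj_psd hω hρp).sqrt * (conj_psd hω hρp).sqrt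
      - (conj_psd hσ hρp).sqrt * (conj_psd hσ hρp).sqrt).PosSemidef := by
    rw [(conj_psd hω hρp).sqrt_mul_self, (conj_psd hσ hρp).sqrt_mul_self]
    exact hdiffpsd
  have hmono := trace_re_mono_of_sq_le_sq (conj_psd hω hρp).posSemidef_sqrt
    (conj_psd hσ hρp).posSemidef_sqrt hsqle
  have first : traceNorm (msqrt σ * msqrt ρ) ≤ traceNorm (msqrt ω * msqrt ρ) := by
    rw [hFσ, hFω]; exact hmono
  refine ⟨first, ?_⟩
  have hfid : fid ω ρ = traceNorm (msqrt ω * msqrt ρ) := by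
    rw [fid, hρre]; simp
  rw [pdist, hfid]
  apply Real.sqrt_le_sqrt
  have h0 : 0 ≤ traceNorm (msqrt σ * msqrt ρ) := by
    rw [hFσ]; exact psd_trace_re_nonneg (conj_psd hσ hρp).posSemidef_sqrt
  nlinarith [first]
end
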